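/- Suppose A belongs to the class 𝒜, Φ satisfies condition δ2 and Φ satisfies condition (*). Then for every ε ∈ (0,1) there exists δ ∈ (0,1) such that for every x̄ ∈ l_Φ^A(X), ρ_Φ^A(x̄) ≤ 1 − ε implies ‖x̄‖_Φ^A ≤ 1 − δ. -/

import Mathlib

open Filter Topology

/-- An Orlicz function: convex, nondecreasing, continuous on `[0,∞)`,
vanishing at `0`, positive on `(0,∞)`, tending to `∞` at `∞`. -/
structure IsOrliczFn (φ : ℝ → ℝ) : Prop where
  convexOn : ConvexOn ℝ (Set.Ici (0 : ℝ)) φ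
  monotoneOn : MonotoneOn φ (Set.Ici (0 : ℝ))
  continuousOn : ContinuousOn φ (Set.Ici (0 : ℝ))
  map_zero : φ 0 = 0
  pos : ∀ t : ℝ, 0 < t → 0 < φ t
  tendsto_atTop : Filter.Tendsto φ Filter.atTop Filter.atTop

/-- A Musielak-Orlicz function: a sequence of Orlicz functions. -/
def IsMusielakOrlicz (Φ : ℕ → ℝ → ℝ) : Prop := ∀ n, IsOrliczFn (Φ n)

/-- Condition δ₂ for a Musielak-Orlicz function. -/
def MOCondDelta2 (Φ : ℕ → ℝ → ℝ) : Prop :=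
  ∃ K > (0 : ℝ), ∃ δ > (0 : ℝ), ∃ c : ℕ → ℝ, (∀ n, 0 ≤ c n) ∧ Summable c ∧
    ∀ n : ℕ, ∀ x : ℝ, 0 ≤ x → Φ n x ≤ δ → Φ n (2 * x) ≤ K * Φ n x + c n

/-- Condition (*) for a Musielak-Orlicz function. -/
def MOCondStar (Φ : ℕ → ℝ → ℝ) : Prop :=
  ∀ ε : ℝ, ε ∈ Set.Ioo (0 : ℝ) 1 → ∃ δ > (0 : ℝ), ∀ n : ℕ, ∀ u : ℝ, 0 ≤ u →
    Φ n u < 1 - ε → Φ n ((1 + δ) * u) ≤ 1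

/-- The class 𝒜 of infinite matrices: every column is nonzero. -/
def MatrixClassA (a : ℕ → ℕ → ℝ) : Prop := ∀ k, ∃ n, a n k ≠ 0

/-- A triangle matrix: nonzero diagonal, zero above the diagonal. -/
def IsTriangle (a : ℕ → ℕ → ℝ) : Prop := (∀ n, a n n ≠ 0) ∧ ∀ n k, n < k → a n k = 0

/-- The `n`-th row sum `∑_k |a_{nk}| ‖x_k‖`. -/
noncomputable def rowSum {X : Type*} [NormedAddCommGroup X]
    (a : ℕ → ℕ → ℝ) (x : ℕ → X) (n : ℕ) : ℝ :=
  ∑' k, |a n k| * ‖x k‖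

/-- Membership in the generalized Musielak-Orlicz sequence space `l_Φ^A(X)`:
`x` is a bounded sequence whose row sums are finite and
`∑_n φ_n(rowSum_n / σ) < ∞` for some `σ > 0`. -/
def MemL {X : Type*} [NormedAddCommGroup X]
    (Φ : ℕ → ℝ → ℝ) (a : ℕ → ℕ → ℝ) (x : ℕ → X) : Prop :=
  (∃ C : ℝ, ∀ k, ‖x k‖ ≤ C) ∧ (∀ n, Summable fun k => |a n k| * ‖x k‖) ∧
    ∃ σ > (0 : ℝ), Summable fun n => Φ n (rowSum a x n / σ)

/-- Membership in `h_Φ^A(X)`: as `MemL` but for every `σ > 0`. -/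
def MemH {X : Type*} [NormedAddCommGroup X]
    (Φ : ℕ → ℝ → ℝ) (a : ℕ → ℕ → ℝ) (x : ℕ → X) : Prop :=
  (∃ C : ℝ, ∀ k, ‖x k‖ ≤ C) ∧ (∀ n, Summable fun k => |a n k| * ‖x k‖) ∧
    ∀ σ > (0 : ℝ), Summable fun n => Φ n (rowSum a x n / σ)

/-- The Luxemburg-type norm `‖x‖_Φ^A`. -/
noncomputable def ANorm {X : Type*} [NormedAddCommGroup X]
    (Φ : ℕ → ℝ → ℝ) (a : ℕ → ℕ → ℝ) (x : ℕ → X) : ℝ :=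
  sInf {σ : ℝ | 0 < σ ∧ (Summable fun n => Φ n (rowSum a x n / σ)) ∧
    (∑' n, Φ n (rowSum a x n / σ)) ≤ 1}

/-- The modular `ρ_Φ^A(x) = ∑_n φ_n(∑_k |a_{nk}| ‖x_k‖)`. -/
noncomputable def rhoA {X : Type*} [NormedAddCommGroup X]
    (Φ : ℕ → ℝ → ℝ) (a : ℕ → ℕ → ℝ) (x : ℕ → X) : ℝ :=
  ∑' n, Φ n (rowSum a x n)

/-- The `m`-th section of a sequence: first `m` coordinates kept, rest zero. -/
def sect {X : Type*} [Zero X] (x : ℕ → X) (m : ℕ) : ℕ → X :=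
  fun k => if k < m then x k else 0

/-!
Since `ρ(x) ≤ 1 - ε`, every term `φₙ(vₙ)` of the modular (`vₙ` the `n`-th row sum) is below
`1 - ε/2`. Where `φₙ(vₙ) ≥ δ₀` (the threshold of δ₂), condition (*) gives `φₙ((1 + d)vₙ) ≤ 1`;
elsewhere δ₂ gives `φₙ(2vₙ) ≤ K φₙ(vₙ) + cₙ`. Convexity interpolates between `vₙ` and these
larger arguments, so that for small `η > 0`
`φₙ((1 + η)vₙ) ≤ φₙ(vₙ) + η (L φₙ(vₙ) + cₙ)` with `L` independent of `n` and `x`: the large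
terms need no separate count because there `1 ≤ φₙ(vₙ)/δ₀`. Summing, `ρ((1 + η)x) ≤ 1 - ε + ηM ≤ 1`
once `η ≤ ε/M`, hence `‖x‖ ≤ 1/(1 + η)`.
-/

open Set

namespace IsOrliczFn

variable {φ : ℝ → ℝ}

lemma mono (hφ : IsOrliczFn φ) {s t : ℝ} (hs : 0 ≤ s) (hst : s ≤ t) : φ s ≤ φ t :=
  hφ.monotoneOn (mem_Ici.mpr hs) (mem_Ici.mpr (hs.trans hst)) hst

lemma nonneg (hφ : IsOrliczFn φ) {t : ℝ} (ht : 0 ≤ t) : 0 ≤ φ t :=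
  hφ.map_zero ▸ hφ.mono le_rfl ht

lemma apply_one_add_mul_mul_le (hφ : IsOrliczFn φ) {u s l : ℝ} (hu : 0 ≤ u) (hs : 0 ≤ s)
    (hl₀ : 0 ≤ l) (hl₁ : l ≤ 1) :
    φ ((1 + l * s) * u) ≤ φ u + l * φ ((1 + s) * u) := by
  have hconv := hφ.convexOn.2 (mem_Ici.mpr hu) (mem_Ici.mpr (by positivity : 0 ≤ (1 + s) * u))
    (sub_nonneg.mpr hl₁) hl₀ (sub_add_cancel 1 l)
  simp only [smul_eq_mul] at hconv
  have harg : (1 - l) * u + l * ((1 + s) * u) = (1 + l * s) * u := by ring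
  rw [harg] at hconv
  nlinarith [hφ.nonneg hu]

lemma apply_one_add_mul_le (hφ : IsOrliczFn φ) {u δ₀ d K c η : ℝ} (hu : 0 ≤ u)
    (hδ₀ : 0 < δ₀) (hd : 0 < d) (hK : 0 ≤ K) (hc : 0 ≤ c) (hη₀ : 0 ≤ η) (hη₁ : η ≤ 1)
    (hηd : η ≤ d) (hlarge : δ₀ ≤ φ u → φ ((1 + d) * u) ≤ 1)
    (hsmall : φ u ≤ δ₀ → φ (2 * u) ≤ K * φ u + c) :
    φ ((1 + η) * u) ≤ φ u + η * (((δ₀ * d)⁻¹ + K) * φ u + c) := by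
  have hsplit : η * (((δ₀ * d)⁻¹ + K) * φ u + c) = η * (φ u / (δ₀ * d)) + η * (K * φ u + c) := by
    ring
  have hKc : 0 ≤ η * (K * φ u + c) := by have := hφ.nonneg hu; positivity
  rcases le_total δ₀ (φ u) with hbig | hsm
  · have hinterp := hφ.apply_one_add_mul_mul_le hu hd.le (div_nonneg hη₀ hd.le)
      ((div_le_one hd).mpr hηd)
    rw [div_mul_cancel₀ η hd.ne'] at hinterp
    have hcapped : η / d * φ ((1 + d) * u) ≤ η / d :=
      mul_le_of_le_one_right (by positivity) (hlarge hbig)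
    have habsorb : η / d ≤ η * (φ u / (δ₀ * d)) :=
      calc η / d = η * (δ₀ / (δ₀ * d)) := by field_simp
        _ ≤ η * (φ u / (δ₀ * d)) := by gcongr
    linarith
  · have hinterp := hφ.apply_one_add_mul_mul_le hu zero_le_one hη₀ hη₁
    rw [mul_one, one_add_one_eq_two] at hinterp
    have hdelta2 : η * φ (2 * u) ≤ η * (K * φ u + c) := by gcongr; exact hsmall hsm
    have hfirst : 0 ≤ η * (φ u / (δ₀ * d)) := by have := hφ.nonneg hu; positivity
    linarith

end IsOrliczFn

lemma rowSum_nonneg {X : Type*} [NormedAddCommGroup X] (a : ℕ → ℕ → ℝ) (x : ℕ → X) (n : ℕ) :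
    0 ≤ rowSum a x n :=
  tsum_nonneg fun _ => by positivity

lemma ANorm_le {X : Type*} [NormedAddCommGroup X] {Φ : ℕ → ℝ → ℝ} {a : ℕ → ℕ → ℝ}
    {x : ℕ → X} {σ : ℝ} (hσ : 0 < σ) (hs : Summable fun n => Φ n (rowSum a x n / σ))
    (hle : ∑' n, Φ n (rowSum a x n / σ) ≤ 1) : ANorm Φ a x ≤ σ :=
  csInf_le ⟨0, fun _ h => h.1.le⟩ ⟨hσ, hs, hle⟩

namespace MOCondDelta2

variable {Φ : ℕ → ℝ → ℝ}

lemma summable_two_mul (hδ : MOCondDelta2 Φ) (hΦ : IsMusielakOrlicz Φ) {u : ℕ → ℝ}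
    (hu : ∀ n, 0 ≤ u n) (hs : Summable fun n => Φ n (u n)) :
    Summable fun n => Φ n (2 * u n) := by
  obtain ⟨K, -, δ₀, hδ₀, c, -, hcs, h2⟩ := hδ
  obtain ⟨N, hN⟩ := eventually_atTop.mp (hs.tendsto_atTop_zero.eventually_lt_const hδ₀)
  rw [← summable_nat_add_iff N]
  refine .of_nonneg_of_le (fun n => (hΦ _).nonneg (by linarith [hu (n + N)]))
    (fun n => h2 _ _ (hu _) (hN _ (Nat.le_add_left N n)).le) ?_
  exact (((summable_nat_add_iff N).2 hs).mul_left K).add ((summable_nat_add_iff N).2 hcs)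

lemma summable_two_pow_mul (hδ : MOCondDelta2 Φ) (hΦ : IsMusielakOrlicz Φ) {u : ℕ → ℝ}
    (hu : ∀ n, 0 ≤ u n) (hs : Summable fun n => Φ n (u n)) (m : ℕ) :
    Summable fun n => Φ n (2 ^ m * u n) := by
  induction m with
  | zero => simpa using hs
  | succ m ih =>
    refine (hδ.summable_two_mul hΦ (fun n => by have := hu n; positivity) ih).congr fun n => ?_
    rw [pow_succ, mul_comm _ 2, mul_assoc]

end MOCondDelta2

lemma MemL.summable_modular {X : Type*} [NormedAddCommGroup X] {Φ : ℕ → ℝ → ℝ}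
    {a : ℕ → ℕ → ℝ} {x : ℕ → X} (hx : MemL Φ a x) (hΦ : IsMusielakOrlicz Φ)
    (hδ : MOCondDelta2 Φ) : Summable fun n => Φ n (rowSum a x n) := by
  obtain ⟨-, -, σ, hσ, hs⟩ := hx
  obtain ⟨m, hm⟩ := pow_unbounded_of_one_lt σ one_lt_two
  refine .of_nonneg_of_le (fun n => (hΦ n).nonneg (rowSum_nonneg a x n)) (fun n => ?_)
    (hδ.summable_two_pow_mul hΦ (fun n => div_nonneg (rowSum_nonneg a x n) hσ.le) hs m)
  refine (hΦ n).mono (rowSum_nonneg a x n) ?_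
  have hv := rowSum_nonneg a x n
  calc rowSum a x n = 2 ^ m * (rowSum a x n / 2 ^ m) := by field_simp
    _ ≤ 2 ^ m * (rowSum a x n / σ) := by gcongr

lemma exists_tsum_one_add_mul_le {Φ : ℕ → ℝ → ℝ} (hΦ : IsMusielakOrlicz Φ)
    (hδ : MOCondDelta2 Φ) (hstar : MOCondStar Φ) {ε : ℝ} (hε : ε ∈ Ioo (0 : ℝ) 1) :
    ∃ M > (0 : ℝ), ∃ η₀ > (0 : ℝ), ∀ η, 0 ≤ η → η ≤ η₀ → ∀ u : ℕ → ℝ, (∀ n, 0 ≤ u n) →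
      Summable (fun n => Φ n (u n)) → ∑' n, Φ n (u n) ≤ 1 - ε →
      Summable (fun n => Φ n ((1 + η) * u n)) ∧ ∑' n, Φ n ((1 + η) * u n) ≤ 1 - ε + η * M := by
  obtain ⟨K, hK, δ₀, hδ₀, c, hc, hcs, h2⟩ := hδ
  obtain ⟨d, hd, hd1⟩ := hstar (ε / 2) ⟨by linarith [hε.1], by linarith [hε.2]⟩
  set L := (δ₀ * d)⁻¹ + K
  have hL : 0 < L := by positivity
  refine ⟨L + ∑' n, c n, add_pos_of_pos_of_nonneg hL (tsum_nonneg hc), min 1 d, lt_min one_pos hd,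
    fun η hη₀ hη u hu hs hsum => ?_⟩
  have hterm : ∀ n, Φ n (u n) ≤ 1 - ε := fun n =>
    (hs.le_tsum n fun m _ => (hΦ m).nonneg (hu m)).trans hsum
  have hpt : ∀ n, Φ n ((1 + η) * u n) ≤ Φ n (u n) + η * (L * Φ n (u n) + c n) := fun n =>
    (hΦ n).apply_one_add_mul_le (hu n) hδ₀ hd hK.le (hc n) hη₀ (hη.trans (min_le_left _ _))
      (hη.trans (min_le_right _ _))
      (fun _ => hd1 n _ (hu n) (by linarith [hterm n, hε.1])) (h2 n _ (hu n))
  have hbound : Summable fun n => Φ n (u n) + η * (L * Φ n (u n) + c n) :=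
    hs.add ((hs.mul_left L).add hcs |>.mul_left η)
  have hdil : Summable fun n => Φ n ((1 + η) * u n) :=
    .of_nonneg_of_le (fun n => (hΦ n).nonneg (by have := hu n; positivity)) hpt hbound
  refine ⟨hdil, ?_⟩
  have htsum : 0 ≤ ∑' n, Φ n (u n) := tsum_nonneg fun n => (hΦ n).nonneg (hu n)
  calc ∑' n, Φ n ((1 + η) * u n)
      ≤ ∑' n, (Φ n (u n) + η * (L * Φ n (u n) + c n)) := hdil.tsum_le_tsum hpt hbound
    _ = ∑' n, Φ n (u n) + η * (L * ∑' n, Φ n (u n) + ∑' n, c n) := by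
      rw [hs.tsum_add ((hs.mul_left L).add hcs |>.mul_left η), tsum_mul_left,
        (hs.mul_left L).tsum_add hcs, tsum_mul_left]
    _ ≤ 1 - ε + η * (L + ∑' n, c n) := by
      have : L * ∑' n, Φ n (u n) ≤ L := mul_le_of_le_one_right hL.le (by linarith [hε.1])
      nlinarith

theorem modular_le_implies_norm_le_general
    {X : Type*} [NormedAddCommGroup X]
    (Φ : ℕ → ℝ → ℝ) (hΦ : IsMusielakOrlicz Φ) (hδ : MOCondDelta2 Φ)
    (hstar : MOCondStar Φ)
    (a : ℕ → ℕ → ℝ) :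
    ∀ ε : ℝ, ε ∈ Set.Ioo (0 : ℝ) 1 → ∃ δ ∈ Set.Ioo (0 : ℝ) 1,
      ∀ x : ℕ → X, MemL Φ a x → rhoA Φ a x ≤ 1 - ε → ANorm Φ a x ≤ 1 - δ := by
  intro ε hε
  obtain ⟨M, hM, η₀, hη₀, hdil⟩ := exists_tsum_one_add_mul_le hΦ hδ hstar hε
  set η := min η₀ (ε / M)
  have hη : 0 < η := lt_min hη₀ (div_pos hε.1 hM)
  have hηM : η * M ≤ ε := (le_div_iff₀ hM).mp (min_le_right _ _)
  refine ⟨η / (1 + η), ⟨by positivity, (div_lt_one (by linarith)).mpr (by linarith)⟩,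
    fun x hx hρ => ?_⟩
  obtain ⟨hs, hle⟩ := hdil η hη.le (min_le_left _ _) (rowSum a x) (rowSum_nonneg a x)
    (hx.summable_modular hΦ hδ) hρ
  have hσ : 1 - η / (1 + η) = (1 + η)⁻¹ := by field_simp; ring
  have hscale : ∀ n, rowSum a x n / (1 - η / (1 + η)) = (1 + η) * rowSum a x n := fun n => by
    rw [hσ, div_inv_eq_mul, mul_comm]
  exact ANorm_le (by rw [hσ]; positivity) (by simpa only [hscale] using hs)
    (by simp only [hscale]; linarith)

/-- for `A ∈ 𝒜`, `Φ ∈ δ₂` satisfying condition (*): for every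
`ε ∈ (0,1)` there is `δ ∈ (0,1)` with `ρ_Φ^A(x̄) ≤ 1 - ε → ‖x̄‖_Φ^A ≤ 1 - δ`. -/
theorem modular_le_implies_norm_le
    {X : Type*} [NormedAddCommGroup X] [NormedSpace ℝ X] [CompleteSpace X]
    (Φ : ℕ → ℝ → ℝ) (hΦ : IsMusielakOrlicz Φ) (hδ : MOCondDelta2 Φ)
    (hstar : MOCondStar Φ)
    (a : ℕ → ℕ → ℝ) (hA : MatrixClassA a) :
    ∀ ε : ℝ, ε ∈ Set.Ioo (0 : ℝ) 1 → ∃ δ ∈ Set.Ioo (0 : ℝ) 1,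
      ∀ x : ℕ → X, MemL Φ a x → rhoA Φ a x ≤ 1 - ε → ANorm Φ a x ≤ 1 - δ :=
  modular_le_implies_norm_le_general Φ hΦ hδ hstar a
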